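/- For every integer k ≥ 1 and every x ∈ [0,1], G_k(x) = (4√2/(2k+1))·(1−x)^{3/2} + (2(k−1)/(2k+1))·(2x−1)·G_{k−1}(x). -/

import Mathlib

open MeasureTheory

/-- `G_k(x) = ∫_{2x-1}^{1} t^{k-1} √(1 + t - 2x) dt` for `k ≥ 1`, with `G₀ ≡ 0`. -/
noncomputable def G : ℕ → ℝ → ℝ
  | 0, _ => 0
  | (k + 1), x => ∫ t in (2 * x - 1)..1, t ^ k * Real.sqrt (1 + t - 2 * x)

/-! Differentiating `t ^ m (t - a) ^ (3/2)` and writing `(t - a) ^ (3/2) = (t - a) √(t - a)`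
turns the fundamental theorem of calculus on `[a, 1]` into a linear relation between
`(1 - a) ^ (3/2)`, `∫ t ^ m √(t - a)` and `m ∫ t ^ (m - 1) √(t - a)`. With `a = 2x - 1` these
integrals are `G (m + 1) x` and `m G m x`, and `1 - a = 2 (1 - x)` produces the factor `2√2`. -/

theorem rpow_three_halves_eq_mul_sqrt {y : ℝ} (hy : 0 ≤ y) :
    y ^ ((3 : ℝ) / 2) = y * √y := by
  rw [show (3 : ℝ) / 2 = 1 + 1 / 2 by norm_num, Real.rpow_add' hy (by norm_num), Real.rpow_one,
    Real.sqrt_eq_rpow]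

theorem hasDerivAt_sub_mul_sqrt_sub {a t : ℝ} (h : a < t) :
    HasDerivAt (fun s => (s - a) * √(s - a)) (3 / 2 * √(t - a)) t := by
  have hpos : 0 < t - a := sub_pos.mpr h
  have hsub : HasDerivAt (fun s => s - a) 1 t := (hasDerivAt_id t).sub_const a
  refine (hsub.fun_mul (hsub.sqrt hpos.ne')).congr_deriv ?_
  field_simp
  rw [Real.sq_sqrt hpos.le]
  ring

theorem natCast_mul_pow_pred_mul_self (m : ℕ) (t : ℝ) :
    (m : ℝ) * t ^ (m - 1) * t = m * t ^ m := by
  cases m with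
  | zero => simp
  | succ n => rw [Nat.add_sub_cancel, pow_succ]; push_cast; ring

/-- At `m = 0` the factor `m` kills the junk integrand `t ^ (0 - 1) = t ^ 0`. -/
theorem integral_pow_mul_sqrt_sub_recurrence {a b : ℝ} (hab : a ≤ b) (m : ℕ) :
    (m + 3 / 2) * ∫ t in a..b, t ^ m * √(t - a)
      = a * (m * ∫ t in a..b, t ^ (m - 1) * √(t - a)) + b ^ m * ((b - a) * √(b - a)) := by
  have hderiv : ∀ t ∈ Set.Ioo a b, HasDerivAt (fun s => s ^ m * ((s - a) * √(s - a)))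
      ((m + 3 / 2) * (t ^ m * √(t - a)) - a * m * (t ^ (m - 1) * √(t - a))) t := by
    intro t ht
    refine ((hasDerivAt_pow m t).fun_mul (hasDerivAt_sub_mul_sqrt_sub ht.1)).congr_deriv ?_
    linear_combination √(t - a) * natCast_mul_pow_pred_mul_self m t
  have hint : ∀ n : ℕ, IntervalIntegrable (fun t => t ^ n * √(t - a)) volume a b := fun n =>
    (by fun_prop : Continuous fun t : ℝ => t ^ n * √(t - a)).intervalIntegrable a b
  have hftc := intervalIntegral.integral_eq_sub_of_hasDerivAt_of_le hab (by fun_prop) hderiv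
    (((hint m).const_mul _).sub ((hint (m - 1)).const_mul _))
  rw [intervalIntegral.integral_sub ((hint m).const_mul _) ((hint (m - 1)).const_mul _),
    intervalIntegral.integral_const_mul, intervalIntegral.integral_const_mul] at hftc
  simp only [sub_self, zero_mul, mul_zero, sub_zero] at hftc
  linear_combination hftc

theorem G_succ_eq_integral (m : ℕ) (x : ℝ) :
    G (m + 1) x = ∫ t in (2 * x - 1)..1, t ^ m * √(t - (2 * x - 1)) :=
  intervalIntegral.integral_congr fun t _ => by ring_nf

theorem natCast_mul_G (m : ℕ) (x : ℝ) :
    (m : ℝ) * G m x = m * ∫ t in (2 * x - 1)..1, t ^ (m - 1) * √(t - (2 * x - 1)) := by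
  cases m with
  | zero => simp
  | succ n => rw [G_succ_eq_integral, Nat.add_sub_cancel]

theorem G_recursion (k : ℕ) (hk : 1 ≤ k) (x : ℝ) (hx : x ∈ Set.Icc (0 : ℝ) 1) :
    G k x = 4 * Real.sqrt 2 / (2 * (k : ℝ) + 1) * (1 - x) ^ ((3 : ℝ) / 2)
      + 2 * ((k : ℝ) - 1) / (2 * (k : ℝ) + 1) * (2 * x - 1) * G (k - 1) x := by
  obtain ⟨m, rfl⟩ : ∃ m, k = m + 1 := ⟨k - 1, by omega⟩
  obtain ⟨-, hx1⟩ := hx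
  have hrec := integral_pow_mul_sqrt_sub_recurrence (a := 2 * x - 1) (b := 1) (by linarith) m
  rw [← G_succ_eq_integral, ← natCast_mul_G, one_pow, one_mul,
    show 1 - (2 * x - 1) = 2 * (1 - x) by ring, Real.sqrt_mul zero_le_two] at hrec
  rw [Nat.add_sub_cancel, rpow_three_halves_eq_mul_sqrt (by linarith)]
  push_cast
  field_simp
  linear_combination 2 * hrec
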